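/- arXiv:2208.09017 — 5 statements merged into one kernel-verified Lean document; each statement's English description precedes it below -/
import Mathlib

section
/- Let D be a digraph, Y ⊆ V(D), X₀ ⊆ V(D) \ Y. Suppose v ∈ V(D) \ (X₀ ∪ Y) is strongly connected to no vertex of Y in D − X₀, and that every closed directed walk in D − X₀ containing both vertices of some pair (s,t) ∈ C must pass through a vertex of Y. Then X′ ⊆ V(D) \ (X₀ ∪ {v}) is a symmetric multicut for ((D − X₀) − v, C') if and only if X′ is a symmetric multicut for (D − X₀, C), where C' removes pairs involving v. -/
/-- Reachability by directed walks in a digraph given by its arc relation. -/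
def Reach {V : Type*} (E : V → V → Prop) : V → V → Prop := Relation.ReflTransGen E

/-- The digraph obtained by deleting the vertex set `X` (induced subgraph on the complement). -/
def Del {V : Type*} (E : V → V → Prop) (X : Set V) : V → V → Prop :=
  fun u v => E u v ∧ u ∉ X ∧ v ∉ X

/-- Two vertices are strongly connected (in the same strongly connected component). -/
def SCC {V : Type*} (E : V → V → Prop) (u v : V) : Prop := Reach E u v ∧ Reach E v u

/-- `X'` is a symmetric multicut for `(H, C)`: no pair `(s,t) ∈ C` with `s, t ∉ X'`
is strongly connected in `H − X'`. -/
def SymMulticut {V : Type*} (E : V → V → Prop) (C : Set (V × V)) (X' : Set V) : Prop :=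
  ∀ p ∈ C, p.1 ∉ X' → p.2 ∉ X' → ¬ SCC (Del E X') p.1 p.2

/-!
A request pair that is strongly connected in `D − X₀` cannot share a strong component with `v`:
otherwise every vertex of `Y` would lie outside that component, so the pair would stay strongly
connected in `D − X₀ − Y`, which the hypothesis on closed walks forbids. Hence no closed walk
through such a pair in `D − X₀ − X'` visits `v`, and deleting `v` changes neither the pairs nor
their strong connectivity.
-/

section

variable {V : Type*} {E F : V → V → Prop} {a b c : V}

theorem del_del (E : V → V → Prop) (S T : Set V) : Del (Del E S) T = Del E (S ∪ T) := by
  ext a b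
  simp only [Del, Set.mem_union]
  tauto

theorem del_anti {S T : Set V} (h : S ⊆ T) : Del E T ≤ Del E S :=
  fun _ _ hab => ⟨hab.1, fun ha => hab.2.1 (h ha), fun hb => hab.2.2 (h hb)⟩

namespace Reach

theorem mono (h : E ≤ F) (hab : Reach E a b) : Reach F a b :=
  Relation.ReflTransGen.mono h a b hab

theorem trans (hab : Reach E a b) (hbc : Reach E b c) : Reach E a c :=
  Relation.ReflTransGen.trans hab hbc

theorem del_or_exists_mem (S : Set V) (hab : Reach E a b) :
    Reach (Del E S) a b ∨ ∃ y ∈ S, Reach E a y ∧ Reach E y b := by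
  induction hab with
  | refl => exact .inl .refl
  | @tail c d hac hcd ih =>
    rcases ih with hac' | ⟨y, hy, hay, hyc⟩
    · by_cases hc : c ∈ S
      · exact .inr ⟨c, hc, hac, .single hcd⟩
      by_cases hd : d ∈ S
      · exact .inr ⟨d, hd, hac.tail hcd, .refl⟩
      exact .inl (hac'.tail ⟨hcd, hc, hd⟩)
    · exact .inr ⟨y, hy, hay, hyc.tail hcd⟩

end Reach

namespace SCC

theorem rfl : SCC E a a := ⟨.refl, .refl⟩

theorem symm (hab : SCC E a b) : SCC E b a := ⟨hab.2, hab.1⟩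

theorem trans (hab : SCC E a b) (hbc : SCC E b c) : SCC E a c :=
  ⟨hab.1.trans hbc.1, hbc.2.trans hab.2⟩

theorem mono (h : E ≤ F) (hab : SCC E a b) : SCC F a b := ⟨hab.1.mono h, hab.2.mono h⟩

/-- A closed walk through `a` meeting `S` would put a vertex of `S` in the component of `a`. -/
theorem del_of_forall_not_scc {S : Set V} (hab : SCC E a b) (hS : ∀ y ∈ S, ¬ SCC E a y) :
    SCC (Del E S) a b := by
  obtain ⟨hab, hba⟩ := hab
  refine ⟨(hab.del_or_exists_mem S).resolve_right ?_,
    (hba.del_or_exists_mem S).resolve_right ?_⟩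
  · rintro ⟨y, hy, hay, hyb⟩
    exact hS y hy ⟨hay, hyb.trans hba⟩
  · rintro ⟨y, hy, hby, hya⟩
    exact hS y hy ⟨hab.trans hby, hya⟩

end SCC

theorem not_scc_of_isolated_of_request {Y : Set V} {C : Set (V × V)} {v : V} {p : V × V}
    (hviso : ∀ y ∈ Y, ¬ SCC E v y)
    (hwalk : ∀ p ∈ C, p.1 ∉ Y → p.2 ∉ Y → ¬ SCC (Del E Y) p.1 p.2)
    (hp : p ∈ C) (h : SCC E p.1 p.2) : ¬ SCC E p.1 v := by
  intro h1v
  have hY : ∀ y ∈ Y, ¬ SCC E p.1 y := fun y hy h1y => hviso y hy (h1v.symm.trans h1y)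
  exact hwalk p hp (fun h1 => hY _ h1 .rfl) (fun h2 => hY _ h2 h) (h.del_of_forall_not_scc hY)

end

theorem remove_isolated_vertex_general {V : Type*} (E : V → V → Prop) (X₀ Y : Set V)
    (C : Set (V × V)) (v : V)
    (hviso : ∀ y ∈ Y, ¬ SCC (Del E X₀) v y)
    (hwalk : ∀ p ∈ C, p.1 ∉ Y → p.2 ∉ Y → ¬ SCC (Del E (X₀ ∪ Y)) p.1 p.2)
    (X' : Set V) :
    SymMulticut (Del E (X₀ ∪ {v})) {p ∈ C | p.1 ≠ v ∧ p.2 ≠ v} X' ↔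
      SymMulticut (Del E X₀) C X' := by
  simp only [SymMulticut, del_del]
  constructor
  · intro hM p hp hp1 hp2 h12
    have hG : SCC (Del E X₀) p.1 p.2 := h12.mono (del_anti Set.subset_union_left)
    have hv : ¬ SCC (Del E X₀) p.1 v :=
      not_scc_of_isolated_of_request hviso (by simpa only [del_del] using hwalk) hp hG
    have hv' : ∀ y ∈ ({v} : Set V), ¬ SCC (Del E (X₀ ∪ X')) p.1 y := by
      rintro y rfl h
      exact hv (h.mono (del_anti Set.subset_union_left))
    refine hM p ⟨hp, fun h => hv (h ▸ .rfl), fun h => hv (h ▸ hG)⟩ hp1 hp2 ?_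
    simpa only [del_del, Set.union_right_comm] using h12.del_of_forall_not_scc hv'
  · intro hM p hp hp1 hp2 h12
    exact hM p hp.1 hp1 hp2
      (h12.mono (del_anti (Set.union_subset_union_left X' Set.subset_union_left)))

/-- If `v` is strongly connected to no vertex of `Y` in `D − X₀` and every closed walk of
`D − X₀` through both endpoints of a cut request meets `Y` (i.e. no request pair outside `Y`
is strongly connected in `D − X₀ − Y`), then symmetric multicuts of `(D − X₀ − v, C')` and of
`(D − X₀, C)` coincide, where `C'` removes pairs involving `v`. -/
theorem remove_isolated_vertex {V : Type*} (E : V → V → Prop) (X₀ Y : Set V)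
    (C : Set (V × V)) (v : V) (hv : v ∉ X₀ ∪ Y)
    (hviso : ∀ y ∈ Y, ¬ SCC (Del E X₀) v y)
    (hwalk : ∀ p ∈ C, p.1 ∉ Y → p.2 ∉ Y → ¬ SCC (Del E (X₀ ∪ Y)) p.1 p.2)
    (X' : Set V) (hX' : X' ⊆ (X₀ ∪ {v})ᶜ) :
    SymMulticut (Del E (X₀ ∪ {v})) {p ∈ C | p.1 ≠ v ∧ p.2 ≠ v} X' ↔
      SymMulticut (Del E X₀) C X' :=
  remove_isolated_vertex_general E X₀ Y C v hviso hwalk X'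
end

section
/- Let S_i, T_i ⊆ V(D) and define A_i = S_i × T_i (a set of ordered pairs). Let Z ⊆ V(D), and define A′_i as the set of pairs (u,v) with u,v ∉ Z such that there is a Z-walk (a walk with endpoints u, v outside Z and all internal vertices in Z) from u to v in D containing an arc of A_i. Then A′_i = S′_i × T′_i for some sets S′_i, T′_i of vertices; equivalently, if (u,v) ∈ A′_i and (u′,v′) ∈ A′_i then (u,v′) ∈ A′_i. -/
/-- A closed directed walk, given as the list of visited vertices (first = last). -/
def ClosedWalk {V : Type*} (E : V → V → Prop) (l : List V) : Prop :=
  l.Chain' E ∧ 2 ≤ l.length ∧ l.head? = l.getLast?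

/-- The walk `l` traverses an arc from the arc set `A`. -/
def ContainsArc {V : Type*} (A : V → V → Prop) (l : List V) : Prop :=
  ∃ l₁ a b l₂, l = l₁ ++ a :: b :: l₂ ∧ A a b

/-- A `Z`-walk from `u` to `v`: a directed walk with endpoints `u, v ∉ Z`
and all internal vertices in `Z`. -/
def ZWalk {V : Type*} (E : V → V → Prop) (Z : Set V) (u v : V) (l : List V) : Prop :=
  l.Chain' E ∧ 2 ≤ l.length ∧ l.head? = some u ∧ l.getLast? = some v ∧
  u ∉ Z ∧ v ∉ Z ∧ ∀ x ∈ (l.drop 1).dropLast, x ∈ Z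

/-! Follow the first walk up to its arc's tail `a ∈ S`, jump along the arc `a b'`, which exists
since `S × T ⊆ E`, to the head `b' ∈ T` of the second walk's arc, and follow the second walk to
its end. -/

lemma dropLast_drop_one_append_cons_cons {α : Type*} (p q : List α) (a b : α) :
    ((p ++ a :: b :: q).drop 1).dropLast = (p ++ [a]).drop 1 ++ (b :: q).dropLast := by
  cases p <;> simp

/-- The internal vertices of the spliced walk are internal vertices of one of the two walks. -/
theorem ZWalk.splice {V : Type*} {E : V → V → Prop} {Z : Set V} {u v u' v' a b a' b' : V}
    {p q p' q' : List V} (h : ZWalk E Z u v (p ++ a :: b :: q))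
    (h' : ZWalk E Z u' v' (p' ++ a' :: b' :: q')) (hab' : E a b') :
    ZWalk E Z u v' (p ++ a :: b' :: q') := by
  obtain ⟨hc, -, hu, -, huZ, -, hint⟩ := h
  obtain ⟨hc', -, -, hv', -, hv'Z, hint'⟩ := h'
  have hchain : (p ++ a :: b' :: q').IsChain E := List.isChain_append_cons_cons.2
    ⟨(List.isChain_append_cons_cons.1 hc).1, hab', (List.isChain_append_cons_cons.1 hc').2.2⟩
  refine ⟨hchain, by simp only [List.length_append, List.length_cons]; omega, ?_, ?_, huZ, hv'Z, ?_⟩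
  · simpa [List.head?_append] using hu
  · simpa [List.getLast?_append_cons] using hv'
  · intro x hx
    rw [dropLast_drop_one_append_cons_cons] at hint hint' hx
    rcases List.mem_append.1 hx with hx | hx
    · exact hint x (List.mem_append_left _ hx)
    · exact hint' x (List.mem_append_right _ hx)

/-- The lifted terminal-arc set `A' = {(u,v) : some Z-walk from u to v contains an arc of
A = S × T}` is again a product of two vertex sets: it is closed under exchanging second
coordinates. -/
theorem lifted_arcs_are_rectangle {V : Type*} (E : V → V → Prop) (S T Z : Set V)
    (hST : ∀ a ∈ S, ∀ b ∈ T, E a b)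
    (A' : V → V → Prop)
    (hA' : ∀ u v, A' u v ↔
      ∃ l, ZWalk E Z u v l ∧ ContainsArc (fun a b => a ∈ S ∧ b ∈ T) l)
    {u v u' v' : V} (h1 : A' u v) (h2 : A' u' v') : A' u v' := by
  rw [hA'] at h1 h2 ⊢
  obtain ⟨_, hw, p, a, b, q, rfl, haS, -⟩ := h1
  obtain ⟨_, hw', p', a', b', q', rfl, -, hb'T⟩ := h2
  exact ⟨_, hw.splice hw' (hST a haS b' hb'T), p, a, b', q', rfl, haS, hb'T⟩
end

section
/- Let D be a digraph, Z ⊆ V(D), and let D′ be the digraph on V(D) \ Z with an arc uv whenever there is a Z-walk from u to v in D. Then for any X ⊆ V(D) \ Z and vertices a, b ∉ Z ∪ X: there is a directed walk from a to b in D − X avoiding X (but possibly using Z) if and only if there is a directed walk from a to b in D′ − X. -/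
lemma chain_reach {V : Type*} {R : V → V → Prop} :
    ∀ (l : List V) (u v : V), l.Chain' R → l.head? = some u → l.getLast? = some v →
      Relation.ReflTransGen R u v := by
  intro l
  induction l with
  | nil => intro u v _ h; simp at h
  | cons x t ih =>
    intro u v hch hhd hlast
    cases t with
    | nil =>
      simp at hhd hlast; subst hhd; subst hlast; exact .refl
    | cons y s =>
      obtain ⟨hxy, hch'⟩ := List.isChain_cons_cons.1 hch
      simp at hhd; subst hhd
      have hlast' : (y :: s).getLast? = some v := by
        simpa [List.getLast?_cons_cons] using hlast
      exact .head hxy (ih y v hch' rfl hlast')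

lemma chain_del {V : Type*} {E : V → V → Prop} {X : Set V} :
    ∀ (l : List V), l.Chain' E → (∀ x ∈ l, x ∉ X) → l.Chain' (Del E X) := by
  intro l
  induction l with
  | nil => intro _ _; exact List.isChain_nil
  | cons x t ih =>
    intro hch hmem
    simp only [List.Chain'] at hch ⊢
    rw [List.isChain_cons] at hch ⊢
    refine ⟨fun b hb => ⟨hch.1 b hb, hmem x (by simp), hmem b (List.mem_cons_of_mem _ (List.mem_of_mem_head? hb))⟩,
      ih hch.2 (fun y hy => hmem y (List.mem_cons_of_mem _ hy))⟩

/-- Reachability among vertices outside `Z ∪ X` is the same in `D − X` and in the torso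
`D' − X`, where `D'` has an arc `uv` whenever there is a `Z`-walk from `u` to `v` in `D`,
and `X` is disjoint from `Z`. -/
theorem torso_reach_iff {V : Type*} (E : V → V → Prop) (Z X : Set V) (hXZ : Disjoint X Z)
    (E' : V → V → Prop) (hE' : ∀ u v, E' u v ↔ ∃ l, ZWalk E Z u v l)
    (a b : V) (ha : a ∉ Z ∪ X) (hb : b ∉ Z ∪ X) :
    Reach (Del E X) a b ↔ Reach (Del E' X) a b := by
  have hbZ : b ∉ Z := fun h => hb (Or.inl h)
  constructor
  · intro h
    have key : ∀ u, Reach (Del E X) u b →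
        (u ∉ Z → Reach (Del E' X) u b) ∧
        (u ∈ Z → ∃ (v : V) (l : List V), v ∉ Z ∧ v ∉ X ∧ l.Chain' E ∧ l.head? = some u ∧
          l.getLast? = some v ∧ (∀ x ∈ l.dropLast, x ∈ Z) ∧ Reach (Del E' X) v b) := by
      intro u hu
      induction hu using Relation.ReflTransGen.head_induction_on with
      | refl => exact ⟨fun _ => .refl, fun hz => absurd (Or.inl hz) hb⟩
      | @head u c h' hrest ih =>
        obtain ⟨hEuc, huX, hcX⟩ := h'
        by_cases hcZ : c ∈ Z
        · obtain ⟨v, l, hvZ, hvX, hch, hhd, hlast, hint, hreach⟩ := ih.2 hcZ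
          obtain ⟨t, rfl⟩ : ∃ t, l = c :: t := by
            cases l with
            | nil => simp at hhd
            | cons y s => simp at hhd; exact ⟨s, by rw [hhd]⟩
          constructor
          · intro huZ
            have hzw : ZWalk E Z u v (u :: c :: t) := by
              refine ⟨List.isChain_cons_cons.2 ⟨hEuc, hch⟩, by simp, rfl, by
                simpa [List.getLast?_cons_cons] using hlast, huZ, hvZ, ?_⟩
              simpa using hint
            exact .head ⟨(hE' u v).2 ⟨_, hzw⟩, huX, hvX⟩ hreach
          · intro huZ
            refine ⟨v, u :: c :: t, hvZ, hvX, List.isChain_cons_cons.2 ⟨hEuc, hch⟩, rfl,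
              by simpa [List.getLast?_cons_cons] using hlast, ?_, hreach⟩
            intro x hx
            rw [List.dropLast_cons₂] at hx
            rcases List.mem_cons.1 hx with rfl | hx
            · exact huZ
            · exact hint x hx
        · constructor
          · intro huZ
            have hzw : ZWalk E Z u c [u, c] := by
              refine ⟨List.isChain_pair.2 hEuc, by simp, rfl, rfl, huZ, hcZ, by simp⟩
            exact .head ⟨(hE' u c).2 ⟨_, hzw⟩, huX, hcX⟩ (ih.1 hcZ)
          · intro huZ
            exact ⟨c, [u, c], hcZ, hcX, List.isChain_pair.2 hEuc, rfl, rfl, by simp [huZ], ih.1 hcZ⟩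
    exact (key a h).1 (fun hz => ha (Or.inl hz))
  · intro h
    induction h with
    | refl => exact .refl
    | @tail c v hstep harc ih =>
      obtain ⟨hE'uv, hcX, hvX⟩ := harc
      obtain ⟨l, hch, hlen, hhd, hlast, hcZ, hvZ, hint⟩ := (hE' c v).1 hE'uv
      have hmem : ∀ x ∈ l, x ∉ X := by
        obtain ⟨t, rfl⟩ : ∃ t : List V, l = c :: t := by
          cases l with
          | nil => simp at hhd
          | cons y s => simp at hhd; exact ⟨s, by rw [hhd]⟩
        intro x hx
        have hne : t ≠ [] := by rintro rfl; simp at hlen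
        rcases List.mem_cons.1 hx with rfl | hx
        · exact hcX
        · rw [← List.dropLast_append_getLast hne] at hx
          rcases List.mem_append.1 hx with hx | hx
          · exact fun hX => hXZ.le_bot ⟨hX, hint x (by simpa using hx)⟩
          · have hx' : x = t.getLast hne := List.mem_singleton.1 hx
            have h1 : (c :: t).getLast (by simp) = v := by
              have h2 := List.getLast?_eq_getLast (l := c :: t) (by simp)
              rw [h2] at hlast
              exact Option.some_inj.1 hlast
            rw [List.getLast_cons hne] at h1
            rw [hx', h1]
            exact hvX
      have hstart : Reach (Del E X) a c := ih (by simp [hcZ, hcX]) hcZ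
      exact hstart.trans (chain_reach l c v (chain_del l hch hmem) hhd hlast)
end

section
/- Let D be a digraph, Z ⊆ V(D), D′ the torso of D on V(D) \ Z (arc uv iff there is a Z-walk from u to v), and A′_i the lifted terminal-arc sets. If X ⊆ V(D) \ Z is such that no closed walk in D − X contains arcs from two distinct sets A_i, A_j, then no closed walk in D′ − X contains arcs from two distinct sets A′_i, A′_j. -/
/-!
A closed walk through an `A`-arc `ab` and a `B`-arc `cd` amounts to the two arcs together with
walks `b ⇝ c` and `d ⇝ a`. Every torso arc of `D' − X` expands to a `Z`-walk, which avoids `X`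
since `X` and `Z` are disjoint; so reachability in `D' − X` implies reachability in `D − X`, and an
arc of `A' i` expands to a walk of `D − X` through an arc of `A i`. Expanding the two arcs and the
two connecting walks of a bad closed walk in `D' − X` therefore yields one in `D − X`.
-/

namespace List

variable {α : Type*} {R : α → α → Prop} {l : List α} {u x : α}

theorem IsChain.reflTransGen_of_head?_eq (hl : l.IsChain R) (hu : l.head? = some u)
    (hx : x ∈ l) : Relation.ReflTransGen R u x :=
  hl.induction (Relation.ReflTransGen R u) l (fun _ _ hyz hy => hy.tail hyz)
    (fun hne => by rw [head?_eq_some_head hne] at hu; cases hu; rfl) x hx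

theorem IsChain.reflTransGen_of_getLast?_eq (hl : l.IsChain R) (hu : l.getLast? = some u)
    (hx : x ∈ l) : Relation.ReflTransGen R x u :=
  hl.backwards_induction (Relation.ReflTransGen R · u) l (fun _ _ hyz hz => hz.head hyz)
    (fun hne => by rw [getLast?_eq_some_getLast hne] at hu; cases hu; rfl) x hx

end List

section Walks

variable {V : Type*} {R A B : V → V → Prop} {l : List V}

theorem ClosedWalk.reflTransGen_of_mem (hl : ClosedWalk R l) {x y : V} (hx : x ∈ l)
    (hy : y ∈ l) : Relation.ReflTransGen R x y := by
  obtain ⟨hc, -, hcl⟩ := hl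
  obtain ⟨u, hu⟩ := Option.isSome_iff_exists.mp (List.isSome_head?.mpr (List.ne_nil_of_mem hx))
  exact (List.IsChain.reflTransGen_of_getLast?_eq hc (hcl ▸ hu) hx).trans
    (List.IsChain.reflTransGen_of_head?_eq hc hu hy)

theorem ContainsArc.exists_rel_of_isChain (hc : l.IsChain R) (hA : ContainsArc A l) :
    ∃ a b, R a b ∧ A a b ∧ a ∈ l ∧ b ∈ l := by
  obtain ⟨l₁, a, b, l₂, rfl, hab⟩ := hA
  exact ⟨a, b, (List.isChain_append_cons_cons.mp hc).2.1, hab, by simp, by simp⟩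

theorem exists_closedWalk_containsArc_containsArc_iff :
    (∃ l, ClosedWalk R l ∧ ContainsArc A l ∧ ContainsArc B l) ↔
      ∃ a b c d, R a b ∧ A a b ∧ R c d ∧ B c d ∧
        Relation.ReflTransGen R b c ∧ Relation.ReflTransGen R d a := by
  constructor
  · rintro ⟨l, hl, hA, hB⟩
    obtain ⟨a, b, hab, hAab, ha, hb⟩ := hA.exists_rel_of_isChain hl.1
    obtain ⟨c, d, hcd, hBcd, hc, hd⟩ := hB.exists_rel_of_isChain hl.1
    exact ⟨a, b, c, d, hab, hAab, hcd, hBcd, hl.reflTransGen_of_mem hb hc,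
      hl.reflTransGen_of_mem hd ha⟩
  · rintro ⟨a, b, c, d, hab, hAab, hcd, hBcd, hbc, hda⟩
    obtain ⟨p, hp, hpc⟩ := List.exists_isChain_cons_of_relationReflTransGen hbc
    obtain ⟨q, hq, hqa⟩ := List.exists_isChain_cons_of_relationReflTransGen hda
    have hsplit : b :: p = (b :: p).dropLast ++ [c] := by
      rw [← hpc, List.dropLast_append_getLast]
    refine ⟨a :: (b :: p ++ d :: q), ⟨?_, by simp, ?_⟩, ⟨[], a, b, p ++ d :: q, rfl, hAab⟩,
      ⟨a :: (b :: p).dropLast, c, d, q, ?_, hBcd⟩⟩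
    · refine .cons_cons hab (hp.append hq ?_)
      simp [List.getLast?_eq_some_getLast, hpc, hcd]
    · simp [List.getLast?_eq_some_getLast, hqa]
    · conv_lhs => rw [hsplit]
      simp

end Walks

namespace ZWalk

variable {V : Type*} {E A : V → V → Prop} {Z X : Set V} {u v : V} {l : List V}

theorem notMem_of_mem (hXZ : Disjoint X Z) (hw : ZWalk E Z u v l) (hu : u ∉ X) (hv : v ∉ X)
    {x : V} (hx : x ∈ l) : x ∉ X := by
  obtain ⟨-, hlen, hhead, hlast, -, -, hint⟩ := hw
  rcases l with _ | ⟨a, t⟩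
  · simp at hx
  rcases List.eq_nil_or_concat t with rfl | ⟨s, b, rfl⟩
  · simp at hlen
  rw [List.concat_eq_append, ← List.cons_append, List.getLast?_concat, Option.some.injEq] at hlast
  simp only [List.concat_eq_append, List.mem_cons, List.mem_append, List.not_mem_nil, or_false,
    List.head?_cons, Option.some.injEq, List.drop_succ_cons, List.drop_zero, ne_eq,
    List.cons_ne_self, not_false_eq_true, List.dropLast_append_of_ne_nil, List.dropLast_singleton,
    List.append_nil] at hx hhead hint
  rcases hx with rfl | hx | rfl
  · exact hhead ▸ hu
  · exact Set.disjoint_right.mp hXZ (hint x hx)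
  · exact hlast ▸ hv

theorem isChain_del (hXZ : Disjoint X Z) (hw : ZWalk E Z u v l) (hu : u ∉ X) (hv : v ∉ X) :
    l.IsChain (Del E X) :=
  hw.1.imp_of_mem_imp fun _ _ ha hb hab =>
    ⟨hab, hw.notMem_of_mem hXZ hu hv ha, hw.notMem_of_mem hXZ hu hv hb⟩

theorem reflTransGen_del (hXZ : Disjoint X Z) (hw : ZWalk E Z u v l) (hu : u ∉ X)
    (hv : v ∉ X) : Relation.ReflTransGen (Del E X) u v :=
  (hw.isChain_del hXZ hu hv).reflTransGen_of_head?_eq hw.2.2.1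
    (List.mem_of_getLast? hw.2.2.2.1)

theorem exists_arc_del (hXZ : Disjoint X Z) (hw : ZWalk E Z u v l) (hu : u ∉ X) (hv : v ∉ X)
    (hA : ContainsArc A l) :
    ∃ x y, Del E X x y ∧ A x y ∧
      Relation.ReflTransGen (Del E X) u x ∧ Relation.ReflTransGen (Del E X) y v := by
  have hc := hw.isChain_del hXZ hu hv
  obtain ⟨x, y, hxy, hAxy, hx, hy⟩ := hA.exists_rel_of_isChain hc
  exact ⟨x, y, hxy, hAxy, hc.reflTransGen_of_head?_eq hw.2.2.1 hx,
    hc.reflTransGen_of_getLast?_eq hw.2.2.2.1 hy⟩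

end ZWalk

theorem reflTransGen_del_le_of_zWalk {V : Type*} {E E' : V → V → Prop} {Z X : Set V}
    (hXZ : Disjoint X Z) (hE' : ∀ u v, E' u v → ∃ l, ZWalk E Z u v l) :
    Relation.ReflTransGen (Del E' X) ≤ Relation.ReflTransGen (Del E X) :=
  Relation.reflTransGen_closed fun u v ⟨huv, hu, hv⟩ =>
    let ⟨_, hw⟩ := hE' u v huv
    hw.reflTransGen_del hXZ hu hv

theorem torso_solution_general {V ι : Type*} (E : V → V → Prop) (Z X : Set V) (hXZ : Disjoint X Z)
    (A : ι → V → V → Prop)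
    (E' : V → V → Prop) (hE' : ∀ u v, E' u v ↔ ∃ l, ZWalk E Z u v l)
    (A' : ι → V → V → Prop)
    (hA' : ∀ i u v, A' i u v ↔ ∃ l, ZWalk E Z u v l ∧ ContainsArc (A i) l)
    (h : ∀ i j : ι, i ≠ j →
      ¬ ∃ l, ClosedWalk (Del E X) l ∧ ContainsArc (A i) l ∧ ContainsArc (A j) l) :
    ∀ i j : ι, i ≠ j →
      ¬ ∃ l, ClosedWalk (Del E' X) l ∧ ContainsArc (A' i) l ∧ ContainsArc (A' j) l := by
  intro i j hij hwalk
  obtain ⟨a, b, c, d, ⟨-, ha, hb⟩, hAab, ⟨-, hc, hd⟩, hAcd, hbc, hda⟩ :=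
    exists_closedWalk_containsArc_containsArc_iff.mp hwalk
  obtain ⟨_, hw₁, hw₁A⟩ := (hA' i a b).mp hAab
  obtain ⟨_, hw₂, hw₂A⟩ := (hA' j c d).mp hAcd
  obtain ⟨x, y, hxy, hAxy, hax, hyb⟩ := hw₁.exists_arc_del hXZ ha hb hw₁A
  obtain ⟨z, w, hzw, hAzw, hcz, hwd⟩ := hw₂.exists_arc_del hXZ hc hd hw₂A
  have hlift := reflTransGen_del_le_of_zWalk hXZ fun u v => (hE' u v).mp
  exact h i j hij <| exists_closedWalk_containsArc_containsArc_iff.mpr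
    ⟨x, y, z, w, hxy, hAxy, hzw, hAzw, hyb.trans ((hlift _ _ hbc).trans hcz),
      hwd.trans ((hlift _ _ hda).trans hax)⟩

/-- If no closed walk in `D − X` contains arcs from two distinct terminal-arc sets `A i`,
`A j`, then no closed walk in the torso `D' − X` contains arcs from two distinct lifted
sets `A' i`, `A' j`. -/
theorem torso_solution {V ι : Type*} (E : V → V → Prop) (Z X : Set V) (hXZ : Disjoint X Z)
    (A : ι → V → V → Prop) (hA : ∀ i a b, A i a b → E a b)
    (E' : V → V → Prop) (hE' : ∀ u v, E' u v ↔ ∃ l, ZWalk E Z u v l)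
    (A' : ι → V → V → Prop)
    (hA' : ∀ i u v, A' i u v ↔ ∃ l, ZWalk E Z u v l ∧ ContainsArc (A i) l)
    (h : ∀ i j : ι, i ≠ j →
      ¬ ∃ l, ClosedWalk (Del E X) l ∧ ContainsArc (A i) l ∧ ContainsArc (A j) l) :
    ∀ i j : ι, i ≠ j →
      ¬ ∃ l, ClosedWalk (Del E' X) l ∧ ContainsArc (A' i) l ∧ ContainsArc (A' j) l :=
  torso_solution_general E Z X hXZ A E' hE' A' hA' h
end

section
/- Let D be a digraph, y ∈ V(D), and X, S, S′ ⊆ V(D) \ {y} with S ⊆ X. Suppose S is exactly the set of vertices of X having an in-neighbour reachable from y in D − X, and that the set of vertices reachable from y in D − S′ is a subset of the set of vertices reachable from y in D − S. Then every closed walk in D − ((X \ S) ∪ S′) passing through y also avoids X; i.e., if a closed walk W through y exists in D − ((X \ S) ∪ S′), then W is a closed walk in D − X. -/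
section

variable {V : Type*}

theorem Del.anti {E : V → V → Prop} {A B : Set V} (hAB : A ⊆ B) {u v : V} (h : Del E B u v) :
    Del E A u v :=
  ⟨h.1, fun hu => h.2.1 (hAB hu), fun hv => h.2.2 (hAB hv)⟩

theorem Reach.notMem_of_del {E : V → V → Prop} {A : Set V} {y v : V} (hy : y ∉ A)
    (h : Reach (Del E A) y v) : v ∉ A := by
  rcases Relation.ReflTransGen.cases_tail h with rfl | ⟨_, _, hv⟩
  · exact hy
  · exact hv.2.2

namespace ClosedWalk

variable {E F : V → V → Prop} {l : List V}

theorem mono (hEF : ∀ u v, E u v → F u v) (hl : ClosedWalk E l) : ClosedWalk F l :=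
  ⟨hl.1.imp fun _ _ => hEF _ _, hl.2⟩

theorem reach_of_mem (hl : ClosedWalk E l) {u v : V} (hu : u ∈ l) (hv : v ∈ l) :
    Reach E u v := by
  have hne : l ≠ [] := List.ne_nil_of_mem hu
  have hhead : l.head hne = l.getLast hne := by
    simpa [List.head?_eq_some_head hne, List.getLast?_eq_some_getLast hne] using hl.2.2
  have to_last : Reach E u (l.getLast hne) :=
    hl.1.backwards_induction (Reach E · (l.getLast hne)) l
      (fun _ _ h hy => .head h hy) (fun _ => .refl) u hu
  have from_head : Reach E (l.head hne) v :=
    hl.1.induction (Reach E (l.head hne) ·) l (fun _ _ h hx => .tail hx h) (fun _ => .refl) v hv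
  exact to_last.trans (hhead ▸ from_head)

theorem del_of_mem_imp {A B : Set V} (hl : ClosedWalk (Del E A) l)
    (hBA : ∀ v ∈ l, v ∈ B → v ∈ A) : ClosedWalk (Del E B) l :=
  ⟨hl.1.imp_of_mem_imp fun a b ha hb h =>
    ⟨h.1, fun haB => h.2.1 (hBA a ha haB), fun hbB => h.2.2 (hBA b hb hbB)⟩, hl.2⟩

end ClosedWalk

end

theorem pushing_preserves_general {V : Type*} (E : V → V → Prop) (y : V) (X S S' : Set V)
    (hyX : y ∉ X) (hSX : S ⊆ X)
    (hpush : {w | Reach (Del E S') y w} ⊆ {w | Reach (Del E S) y w})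
    (l : List V) (hl : ClosedWalk (Del E ((X \ S) ∪ S')) l) (hy : y ∈ l) :
    ClosedWalk (Del E X) l := by
  have reach_avoiding_S' : ∀ v ∈ l, Reach (Del E S') y v := fun v hv =>
    (hl.mono fun _ _ => Del.anti Set.subset_union_right).reach_of_mem hy hv
  have notMem_S : ∀ v ∈ l, v ∉ S := fun v hv =>
    Reach.notMem_of_del (fun hyS => hyX (hSX hyS)) (hpush (reach_avoiding_S' v hv))
  exact hl.del_of_mem_imp fun v hv hvX => Or.inl ⟨hvX, notMem_S v hv⟩

/-- The pushing step: let `S ⊆ X` be the vertices of `X` with an in-neighbour reachable from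
`y` in `D − X`, and let `S'` be a cut with the set of vertices reachable from `y` in `D − S'`
contained in the one for `D − S`. Then any closed walk through `y` in `D − ((X \ S) ∪ S')`
avoids `X`, i.e. it is a closed walk in `D − X`. -/
theorem pushing_preserves {V : Type*} (E : V → V → Prop) (y : V) (X S S' : Set V)
    (hyX : y ∉ X) (hyS' : y ∉ S') (hSX : S ⊆ X)
    (hSdef : S = {x | x ∈ X ∧ ∃ u, E u x ∧ Reach (Del E X) y u})
    (hpush : {w | Reach (Del E S') y w} ⊆ {w | Reach (Del E S) y w})
    (l : List V) (hl : ClosedWalk (Del E ((X \ S) ∪ S')) l) (hy : y ∈ l) :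
    ClosedWalk (Del E X) l :=
  pushing_preserves_general E y X S S' hyX hSX hpush l hl hy
end
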